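/- arXiv:1512.04629 — 4 statements merged into one kernel-verified Lean document; each statement's English description precedes it below -/
import Mathlib

section
/- Let A be a real symmetric, diagonally dominant matrix with nonnegative diagonal. Fix i ≠ j and define B by the symmetric diagonal lumping: B_{ii} = A_{ii} + A_{ij}, B_{jj} = A_{jj} + A_{ji}, B_{ij} = B_{ji} = 0, and B agrees with A elsewhere. Then B is symmetric, diagonally dominant with nonnegative diagonal, and hence positive semi-definite. -/
open Matrix Finset

namespace Matrix

variable {ι : Type*}

theorem IsSymm.of_lump {α : Type*} [Zero α] {A B : Matrix ι ι α} {i j : ι} (hA : A.IsSymm)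
    (hBij : B i j = 0) (hBji : B j i = 0)
    (hB : ∀ k l, ¬(k = i ∧ l = i) → ¬(k = j ∧ l = j) → ¬(k = i ∧ l = j) → ¬(k = j ∧ l = i) →
      B k l = A k l) :
    B.IsSymm := by
  ext k l
  rw [transpose_apply]
  by_cases hkl : k = l
  · rw [hkl]
  by_cases hpair : (k = i ∧ l = j) ∨ (k = j ∧ l = i)
  · rcases hpair with ⟨rfl, rfl⟩ | ⟨rfl, rfl⟩ <;> rw [hBij, hBji]
  · rw [hB k l (by grind) (by grind) (by grind) (by grind),
      hB l k (by grind) (by grind) (by grind) (by grind), hA.apply]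

variable [Fintype ι] [DecidableEq ι]

/-- By Gershgorin every eigenvalue lies within `∑_{k ≠ r} |M r k| ≤ M r r` of some `M r r`. -/
theorem IsSymm.posSemidef_of_sum_abs_offDiag_le {M : Matrix ι ι ℝ} (hM : M.IsSymm)
    (hdd : ∀ r, ∑ k ∈ univ \ {r}, |M r k| ≤ M r r) : M.PosSemidef := by
  have hH : M.IsHermitian := isHermitian_iff_isSymm.mpr hM
  rw [hH.posSemidef_iff_eigenvalues_nonneg]
  intro e
  rw [Pi.zero_apply]
  have heig : Module.End.HasEigenvalue (toLin' M) (hH.eigenvalues e) := by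
    rw [Module.End.hasEigenvalue_iff_mem_spectrum, spectrum_toLin']
    exact hH.eigenvalues_mem_spectrum_real e
  obtain ⟨r, hr⟩ := eigenvalue_mem_ball heig
  rw [Metric.mem_closedBall, Real.dist_eq] at hr
  have hrow : ∑ k ∈ univ.erase r, ‖M r k‖ ≤ M r r := by
    simpa only [erase_eq, Real.norm_eq_abs] using hdd r
  linarith [(abs_le.mp hr).1]

theorem sum_abs_offDiag_le_of_lump {α : Type*} [AddCommGroup α] [LinearOrder α]
    [IsOrderedAddMonoid α] {A B : Matrix ι ι α} {r s : ι} (hrs : r ≠ s)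
    (hA : ∑ k ∈ univ \ {r}, |A r k| ≤ A r r)
    (hBs : B r s = 0) (hBr : B r r = A r r + A r s) (hB : ∀ k, k ≠ r → k ≠ s → B r k = A r k) :
    ∑ k ∈ univ \ {r}, |B r k| ≤ B r r := by
  have hs : s ∈ univ \ {r} := by simp [hrs.symm]
  calc ∑ k ∈ univ \ {r}, |B r k|
      = ∑ k ∈ (univ \ {r}).erase s, |A r k| := by
        rw [← add_sum_erase _ _ hs, hBs, abs_zero, zero_add]
        refine sum_congr rfl fun k hk => ?_
        simp only [mem_erase, mem_sdiff, mem_singleton] at hk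
        rw [hB k hk.2.2 hk.1]
    _ = ∑ k ∈ univ \ {r}, |A r k| - |A r s| := sum_erase_eq_sub hs
    _ ≤ A r r + A r s := by rw [sub_eq_add_neg]; exact add_le_add hA (neg_abs_le _)
    _ = B r r := hBr.symm

end Matrix

theorem stmt2_general {n : ℕ} (A B : Matrix (Fin n) (Fin n) ℝ)
    (hsym : A.IsSymm)
    (hdd : ∀ r, ∑ k ∈ Finset.univ \ {r}, |A r k| ≤ A r r)
    (i j : Fin n) (hij : i ≠ j)
    (hBii : B i i = A i i + A i j)
    (hBjj : B j j = A j j + A j i)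
    (hBij : B i j = 0) (hBji : B j i = 0)
    (hB : ∀ k l : Fin n,
      ¬(k = i ∧ l = i) → ¬(k = j ∧ l = j) → ¬(k = i ∧ l = j) → ¬(k = j ∧ l = i) →
      B k l = A k l) :
    B.IsSymm ∧ (∀ r, ∑ k ∈ Finset.univ \ {r}, |B r k| ≤ B r r) ∧
      (∀ r, 0 ≤ B r r) ∧ B.PosSemidef := by
  have hBsym : B.IsSymm := hsym.of_lump hBij hBji hB
  have hddB : ∀ r, ∑ k ∈ univ \ {r}, |B r k| ≤ B r r := by
    intro r
    by_cases hri : r = i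
    · subst hri
      exact sum_abs_offDiag_le_of_lump hij (hdd r) hBij hBii
        fun k hkr hkj => hB r k (by grind) (by grind) (by grind) (by grind)
    by_cases hrj : r = j
    · subst hrj
      exact sum_abs_offDiag_le_of_lump hij.symm (hdd r) hBji hBjj
        fun k hkr hki => hB r k (by grind) (by grind) (by grind) (by grind)
    have hrow : ∀ k, B r k = A r k := fun k => hB r k (by grind) (by grind) (by grind) (by grind)
    simpa only [hrow] using hdd r
  have hdiagB : ∀ r, 0 ≤ B r r := fun r => (sum_nonneg fun _ _ => abs_nonneg _).trans (hddB r)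
  exact ⟨hBsym, hddB, hdiagB, hBsym.posSemidef_of_sum_abs_offDiag_le hddB⟩

theorem stmt2 {n : ℕ} (A B : Matrix (Fin n) (Fin n) ℝ)
    (hsym : A.IsSymm)
    (hdd : ∀ r, ∑ k ∈ Finset.univ \ {r}, |A r k| ≤ A r r)
    (hdiag : ∀ r, 0 ≤ A r r)
    (i j : Fin n) (hij : i ≠ j)
    (hBii : B i i = A i i + A i j)
    (hBjj : B j j = A j j + A j i)
    (hBij : B i j = 0) (hBji : B j i = 0)
    (hB : ∀ k l : Fin n,
      ¬(k = i ∧ l = i) → ¬(k = j ∧ l = j) → ¬(k = i ∧ l = j) → ¬(k = j ∧ l = i) →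
      B k l = A k l) :
    B.IsSymm ∧ (∀ r, ∑ k ∈ Finset.univ \ {r}, |B r k| ≤ B r r) ∧
      (∀ r, 0 ≤ B r r) ∧ B.PosSemidef :=
  stmt2_general A B hsym hdd i j hij hBii hBjj hBij hBji hB
end

section
/- Let A be a real symmetric, diagonally dominant matrix with nonnegative diagonal, and let N ⊆ {1,…,n}×{1,…,n} be a symmetric set of index pairs ((i,j) ∈ N ⟺ (j,i) ∈ N) containing all diagonal pairs (i,i). Define Â by Â_{ij} = A_{ij} if (i,j) ∈ N, Â_{ij} = 0 if (i,j) ∉ N and i ≠ j, and Â_{ii} = A_{ii} + Σ_{j : j ≠ i, (i,j) ∉ N} A_{ij}. Then Â is symmetric, diagonally dominant with nonnegative diagonal, and positive semi-definite. -/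
open Matrix Finset

/-!
Dropping an off-diagonal entry `A i j` and adding it to the diagonal lowers `A i i` by at most
`|A i j|`, which is exactly what row `i` loses from its off-diagonal absolute sum, so diagonal
dominance survives; symmetry survives because `N` is symmetric. A symmetric diagonally dominant
matrix is positive semidefinite by Gershgorin's circle theorem: each eigenvalue lies within
`∑ j ≠ k, |A k j| ≤ A k k` of some diagonal entry `A k k`.
-/

theorem Matrix.posSemidef_of_isSymm_of_sum_abs_le_diag {ι : Type*} [Fintype ι] [DecidableEq ι]
    {A : Matrix ι ι ℝ} (hA : A.IsSymm) (hdd : ∀ i, ∑ j ∈ univ \ {i}, |A i j| ≤ A i i) :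
    A.PosSemidef := by
  have hherm : A.IsHermitian := by simpa [IsHermitian] using hA.eq
  refine hherm.posSemidef_iff_eigenvalues_nonneg.mpr fun i => ?_
  have hμ : Module.End.HasEigenvalue (toLin' A) (hherm.eigenvalues i) := by
    rw [Module.End.hasEigenvalue_iff_mem_spectrum, spectrum_toLin']
    exact hherm.eigenvalues_mem_spectrum_real i
  obtain ⟨k, hk⟩ := eigenvalue_mem_ball hμ
  rw [Metric.mem_closedBall, Real.dist_eq] at hk
  have := hdd k
  simp only [sdiff_singleton_eq_erase, Real.norm_eq_abs] at this hk
  simp only [Pi.zero_apply]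
  linarith [neg_abs_le (hherm.eigenvalues i - A k k)]

theorem isSymm_of_lumping {ι : Type*} {A Ahat : Matrix ι ι ℝ} (N : Finset (ι × ι))
    (hA : A.IsSymm) (hNsym : ∀ i j, (i, j) ∈ N ↔ (j, i) ∈ N)
    (hkeep : ∀ i j, i ≠ j → (i, j) ∈ N → Ahat i j = A i j)
    (hdrop : ∀ i j, i ≠ j → (i, j) ∉ N → Ahat i j = 0) :
    Ahat.IsSymm := by
  refine IsSymm.ext fun i j => ?_
  obtain rfl | hij := eq_or_ne i j
  · rfl
  by_cases hN : (i, j) ∈ N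
  · rw [hkeep i j hij hN, hkeep j i hij.symm ((hNsym i j).mp hN), hA.apply]
  · rw [hdrop i j hij hN, hdrop j i hij.symm (mt (hNsym j i).mp hN)]

theorem sum_abs_le_diag_of_lumping {ι : Type*} [Fintype ι] [DecidableEq ι]
    {A Ahat : Matrix ι ι ℝ} (N : Finset (ι × ι))
    (hdd : ∀ i, ∑ j ∈ univ \ {i}, |A i j| ≤ A i i)
    (hkeep : ∀ i j, i ≠ j → (i, j) ∈ N → Ahat i j = A i j)
    (hdrop : ∀ i j, i ≠ j → (i, j) ∉ N → Ahat i j = 0)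
    (hAdiag : ∀ i, Ahat i i = A i i + ∑ j ∈ univ.filter (fun j => j ≠ i ∧ (i, j) ∉ N), A i j)
    (i : ι) : ∑ j ∈ univ \ {i}, |Ahat i j| ≤ Ahat i i := by
  set D := univ.filter (fun j => j ≠ i ∧ (i, j) ∉ N)
  have hD : D = (univ \ {i}).filter (fun j => (i, j) ∉ N) := by
    ext j; simp [D]
  have hrow : ∑ j ∈ univ \ {i}, |Ahat i j| + ∑ j ∈ D, |A i j| = ∑ j ∈ univ \ {i}, |A i j| := by
    rw [hD, sum_filter, ← sum_add_distrib]
    refine sum_congr rfl fun j hj => ?_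
    have hij : i ≠ j := fun h => by simp [h] at hj
    by_cases hN : (i, j) ∈ N
    · simp [hN, hkeep i j hij hN]
    · simp [hN, hdrop i j hij hN]
  have hlow : -∑ j ∈ D, |A i j| ≤ ∑ j ∈ D, A i j := by
    rw [← sum_neg_distrib]; exact sum_le_sum fun j _ => neg_abs_le _
  linarith [hdd i, hAdiag i]

theorem stmt3_general {n : ℕ} (A Ahat : Matrix (Fin n) (Fin n) ℝ)
    (N : Finset (Fin n × Fin n))
    (hsym : A.IsSymm)
    (hdd : ∀ r, ∑ k ∈ Finset.univ \ {r}, |A r k| ≤ A r r)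
    (hNsym : ∀ i j : Fin n, (i, j) ∈ N ↔ (j, i) ∈ N)
    (hkeep : ∀ i j : Fin n, i ≠ j → (i, j) ∈ N → Ahat i j = A i j)
    (hdrop : ∀ i j : Fin n, i ≠ j → (i, j) ∉ N → Ahat i j = 0)
    (hAdiag : ∀ i : Fin n,
      Ahat i i = A i i + ∑ j ∈ Finset.univ.filter (fun j => j ≠ i ∧ (i, j) ∉ N), A i j) :
    Ahat.IsSymm ∧ (∀ r, ∑ k ∈ Finset.univ \ {r}, |Ahat r k| ≤ Ahat r r) ∧
      (∀ r, 0 ≤ Ahat r r) ∧ Ahat.PosSemidef := by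
  have hsymhat := isSymm_of_lumping N hsym hNsym hkeep hdrop
  have hddhat := sum_abs_le_diag_of_lumping N hdd hkeep hdrop hAdiag
  exact ⟨hsymhat, hddhat, fun r => (sum_nonneg fun _ _ => abs_nonneg _).trans (hddhat r),
    posSemidef_of_isSymm_of_sum_abs_le_diag hsymhat hddhat⟩

theorem stmt3 {n : ℕ} (A Ahat : Matrix (Fin n) (Fin n) ℝ)
    (N : Finset (Fin n × Fin n))
    (hsym : A.IsSymm)
    (hdd : ∀ r, ∑ k ∈ Finset.univ \ {r}, |A r k| ≤ A r r)
    (hdiag : ∀ r, 0 ≤ A r r)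
    (hNsym : ∀ i j : Fin n, (i, j) ∈ N ↔ (j, i) ∈ N)
    (hNdiag : ∀ i : Fin n, (i, i) ∈ N)
    (hkeep : ∀ i j : Fin n, i ≠ j → (i, j) ∈ N → Ahat i j = A i j)
    (hdrop : ∀ i j : Fin n, i ≠ j → (i, j) ∉ N → Ahat i j = 0)
    (hAdiag : ∀ i : Fin n,
      Ahat i i = A i i + ∑ j ∈ Finset.univ.filter (fun j => j ≠ i ∧ (i, j) ∉ N), A i j) :
    Ahat.IsSymm ∧ (∀ r, ∑ k ∈ Finset.univ \ {r}, |Ahat r k| ≤ Ahat r r) ∧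
      (∀ r, 0 ≤ Ahat r r) ∧ Ahat.PosSemidef :=
  stmt3_general A Ahat N hsym hdd hNsym hkeep hdrop hAdiag
end

section
/- Under the hypotheses of the diagonal-lumping theorem (A symmetric, diagonally dominant with nonnegative diagonal, Â obtained by lumping all off-diagonal entries outside a symmetric keep-pattern N onto the diagonal), if additionally some row i₀ of A is strictly diagonally dominant (A_{i₀i₀} > Σ_{k≠i₀}|A_{i₀k}|), then row i₀ of Â is strictly diagonally dominant: Â_{i₀i₀} > Σ_{k≠i₀}|Â_{i₀k}|. -/
open Matrix Finset

/-!
Lumping never moves the left edge `a i - ∑ k ≠ i, |a k|` of a row's Gershgorin disc to the left: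
kept entries appear unchanged in the radius, while each dropped entry `a k` leaves the radius,
costing `|a k|`, and shifts the centre by `a k ≥ -|a k|`.
-/

theorem gershgorin_left_edge_le_of_lump {ι R : Type*} [Fintype ι] [DecidableEq ι]
    [AddCommGroup R] [LinearOrder R] [IsOrderedAddMonoid R]
    (a b : ι → R) (i : ι) (keep : ι → Prop) [DecidablePred keep]
    (hkeep : ∀ j, j ≠ i → keep j → b j = a j)
    (hdrop : ∀ j, j ≠ i → ¬ keep j → b j = 0)
    (hdiag : b i = a i + ∑ j ∈ univ.filter (fun j => j ≠ i ∧ ¬ keep j), a j) :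
    a i - ∑ k ∈ univ \ {i}, |a k| ≤ b i - ∑ k ∈ univ \ {i}, |b k| := by
  set S := univ \ {i}
  have hS : ∀ j, j ∈ S ↔ j ≠ i := by simp [S]
  have hb : ∑ k ∈ S, |b k| = ∑ k ∈ S.filter keep, |a k| := by
    rw [← sum_filter_add_sum_filter_not S keep, add_eq_left.mpr]
    · refine sum_congr rfl fun k hk => ?_
      rw [mem_filter, hS] at hk
      rw [hkeep k hk.1 hk.2]
    · refine sum_eq_zero fun k hk => ?_
      rw [mem_filter, hS] at hk
      rw [hdrop k hk.1 hk.2, abs_zero]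
  have hdropped : univ.filter (fun j => j ≠ i ∧ ¬ keep j) = S.filter (¬ keep ·) := by
    ext j
    simp [hS]
  have hlump : -∑ k ∈ S.filter (¬ keep ·), |a k| ≤ ∑ k ∈ S.filter (¬ keep ·), a k :=
    neg_le_of_abs_le (abs_sum_le_sum_abs _ _)
  rw [hb, hdiag, hdropped, ← sum_filter_add_sum_filter_not S keep (fun k => |a k|)]
  calc a i - (∑ k ∈ S.filter keep, |a k| + ∑ k ∈ S.filter (¬ keep ·), |a k|)
      = a i + -∑ k ∈ S.filter (¬ keep ·), |a k| - ∑ k ∈ S.filter keep, |a k| := by abel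
    _ ≤ a i + ∑ k ∈ S.filter (¬ keep ·), a k - ∑ k ∈ S.filter keep, |a k| := by gcongr

theorem stmt4_general {n : ℕ} (A Ahat : Matrix (Fin n) (Fin n) ℝ)
    (N : Finset (Fin n × Fin n))
    (hkeep : ∀ i j : Fin n, i ≠ j → (i, j) ∈ N → Ahat i j = A i j)
    (hdrop : ∀ i j : Fin n, i ≠ j → (i, j) ∉ N → Ahat i j = 0)
    (hAdiag : ∀ i : Fin n,
      Ahat i i = A i i + ∑ j ∈ Finset.univ.filter (fun j => j ≠ i ∧ (i, j) ∉ N), A i j)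
    (i₀ : Fin n)
    (hstrict : ∑ k ∈ Finset.univ \ {i₀}, |A i₀ k| < A i₀ i₀) :
    ∑ k ∈ Finset.univ \ {i₀}, |Ahat i₀ k| < Ahat i₀ i₀ := by
  have hedge := gershgorin_left_edge_le_of_lump (A i₀) (Ahat i₀) i₀ (fun j => (i₀, j) ∈ N)
    (fun j hj => hkeep i₀ j hj.symm) (fun j hj => hdrop i₀ j hj.symm) (hAdiag i₀)
  linarith

theorem stmt4 {n : ℕ} (A Ahat : Matrix (Fin n) (Fin n) ℝ)
    (N : Finset (Fin n × Fin n))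
    (hsym : A.IsSymm)
    (hdd : ∀ r, ∑ k ∈ Finset.univ \ {r}, |A r k| ≤ A r r)
    (hdiag : ∀ r, 0 ≤ A r r)
    (hNsym : ∀ i j : Fin n, (i, j) ∈ N ↔ (j, i) ∈ N)
    (hNdiag : ∀ i : Fin n, (i, i) ∈ N)
    (hkeep : ∀ i j : Fin n, i ≠ j → (i, j) ∈ N → Ahat i j = A i j)
    (hdrop : ∀ i j : Fin n, i ≠ j → (i, j) ∉ N → Ahat i j = 0)
    (hAdiag : ∀ i : Fin n,
      Ahat i i = A i i + ∑ j ∈ Finset.univ.filter (fun j => j ≠ i ∧ (i, j) ∉ N), A i j)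
    (i₀ : Fin n)
    (hstrict : ∑ k ∈ Finset.univ \ {i₀}, |A i₀ k| < A i₀ i₀) :
    ∑ k ∈ Finset.univ \ {i₀}, |Ahat i₀ k| < Ahat i₀ i₀ :=
  stmt4_general A Ahat N hkeep hdrop hAdiag i₀ hstrict
end

section
/- Let A be symmetric with nonnegative diagonal and diagonally dominant, and suppose the lumping in Algorithm 3b removes only entries A_{ij} with (i,j) outside a symmetric keep set. Then every eigenvalue λ of the lumped matrix Â satisfies λ ≥ 0, and moreover the left edges of the Gershgorin discs do not move left: for each row i, Â_{ii} − Σ_{k≠i}|Â_{ik}| ≥ A_{ii} − Σ_{k≠i}|A_{ik}|. -/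
/-!
Off-diagonal entries dropped from row `i` are added to the diagonal. Each such entry `a` trades
`|a|` in the off-diagonal row sum for `a ≥ -|a|` on the diagonal, so the left edge
`M i i - ∑ k ≠ i, |M i k|` of every Gershgorin disc can only move right. Diagonal dominance of `A`
puts all left edges of `A`, hence of `Â`, at or right of `0`, and by Gershgorin's circle theorem
every real eigenvalue of `Â` lies right of some left edge.
-/

open Matrix Finset

variable {ι : Type*} [Fintype ι] [DecidableEq ι]

def gershgorinLeftEdge (M : Matrix ι ι ℝ) (i : ι) : ℝ :=
  M i i - ∑ k ∈ univ \ {i}, |M i k|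

theorem exists_gershgorinLeftEdge_le_of_mulVec_eq_smul {M : Matrix ι ι ℝ} {v : ι → ℝ} {lam : ℝ}
    (hv : v ≠ 0) (hMv : M *ᵥ v = lam • v) : ∃ i, gershgorinLeftEdge M i ≤ lam := by
  have hlam : Module.End.HasEigenvalue (toLin' M) lam :=
    Module.End.hasEigenvalue_of_hasEigenvector
      ⟨Module.End.mem_eigenspace_iff.mpr (by rwa [toLin'_apply]), hv⟩
  obtain ⟨i, hi⟩ := eigenvalue_mem_ball hlam
  refine ⟨i, ?_⟩
  rw [Metric.mem_closedBall, Real.dist_eq] at hi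
  simp only [Real.norm_eq_abs, ← sdiff_singleton_eq_erase] at hi
  unfold gershgorinLeftEdge
  linarith [neg_abs_le (lam - M i i)]

theorem gershgorinLeftEdge_le_of_lump {A Ahat : Matrix ι ι ℝ} {N : Finset (ι × ι)} {i : ι}
    (hkeep : ∀ j, i ≠ j → (i, j) ∈ N → Ahat i j = A i j)
    (hdrop : ∀ j, i ≠ j → (i, j) ∉ N → Ahat i j = 0)
    (hAdiag : Ahat i i = A i i + ∑ j ∈ univ.filter (fun j => j ≠ i ∧ (i, j) ∉ N), A i j) :
    gershgorinLeftEdge A i ≤ gershgorinLeftEdge Ahat i := by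
  have hdropped : univ.filter (fun j => j ≠ i ∧ (i, j) ∉ N) =
      (univ \ {i}).filter (fun j => (i, j) ∉ N) := by
    ext j
    simp
  have habs_diff : ∑ k ∈ univ \ {i}, (|A i k| - |Ahat i k|) =
      ∑ k ∈ univ.filter (fun j => j ≠ i ∧ (i, j) ∉ N), |A i k| := by
    rw [hdropped, sum_filter]
    refine sum_congr rfl fun k hk => ?_
    have hik : i ≠ k := by simpa [eq_comm] using hk
    by_cases hkN : (i, k) ∈ N
    · simp [hkN, hkeep k hik hkN]
    · simp [hkN, hdrop k hik hkN]
  have hdiag_gain : -∑ k ∈ univ.filter (fun j => j ≠ i ∧ (i, j) ∉ N), |A i k| ≤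
      ∑ k ∈ univ.filter (fun j => j ≠ i ∧ (i, j) ∉ N), A i k := by
    rw [← sum_neg_distrib]
    exact sum_le_sum fun k _ => neg_abs_le _
  rw [sum_sub_distrib] at habs_diff
  unfold gershgorinLeftEdge
  linarith

theorem stmt13_general {n : ℕ} (A Ahat : Matrix (Fin n) (Fin n) ℝ)
    (N : Finset (Fin n × Fin n))
    (hdd : ∀ r, ∑ k ∈ Finset.univ \ {r}, |A r k| ≤ A r r)
    (hkeep : ∀ i j : Fin n, i ≠ j → (i, j) ∈ N → Ahat i j = A i j)
    (hdrop : ∀ i j : Fin n, i ≠ j → (i, j) ∉ N → Ahat i j = 0)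
    (hAdiag : ∀ i : Fin n,
      Ahat i i = A i i + ∑ j ∈ Finset.univ.filter (fun j => j ≠ i ∧ (i, j) ∉ N), A i j) :
    (∀ lam : ℝ, (∃ v : Fin n → ℝ, v ≠ 0 ∧ Ahat.mulVec v = lam • v) → 0 ≤ lam) ∧
    (∀ i : Fin n,
      A i i - ∑ k ∈ Finset.univ \ {i}, |A i k| ≤
      Ahat i i - ∑ k ∈ Finset.univ \ {i}, |Ahat i k|) := by
  have hedge (i : Fin n) : gershgorinLeftEdge A i ≤ gershgorinLeftEdge Ahat i :=
    gershgorinLeftEdge_le_of_lump (hkeep i) (hdrop i) (hAdiag i)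
  refine ⟨?_, hedge⟩
  rintro lam ⟨v, hv, hAv⟩
  obtain ⟨i, hi⟩ := exists_gershgorinLeftEdge_le_of_mulVec_eq_smul hv hAv
  have hA : 0 ≤ gershgorinLeftEdge A i := sub_nonneg.mpr (hdd i)
  linarith [hedge i]

theorem stmt13 {n : ℕ} (A Ahat : Matrix (Fin n) (Fin n) ℝ)
    (N : Finset (Fin n × Fin n))
    (hsym : A.IsSymm)
    (hdd : ∀ r, ∑ k ∈ Finset.univ \ {r}, |A r k| ≤ A r r)
    (hdiag : ∀ r, 0 ≤ A r r)
    (hNsym : ∀ i j : Fin n, (i, j) ∈ N ↔ (j, i) ∈ N)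
    (hNdiag : ∀ i : Fin n, (i, i) ∈ N)
    (hkeep : ∀ i j : Fin n, i ≠ j → (i, j) ∈ N → Ahat i j = A i j)
    (hdrop : ∀ i j : Fin n, i ≠ j → (i, j) ∉ N → Ahat i j = 0)
    (hAdiag : ∀ i : Fin n,
      Ahat i i = A i i + ∑ j ∈ Finset.univ.filter (fun j => j ≠ i ∧ (i, j) ∉ N), A i j) :
    (∀ lam : ℝ, (∃ v : Fin n → ℝ, v ≠ 0 ∧ Ahat.mulVec v = lam • v) → 0 ≤ lam) ∧
    (∀ i : Fin n,
      A i i - ∑ k ∈ Finset.univ \ {i}, |A i k| ≤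
      Ahat i i - ∑ k ∈ Finset.univ \ {i}, |Ahat i k|) :=
  stmt13_general A Ahat N hdd hkeep hdrop hAdiag
end
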